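/- If n is odd and n ≥ 7, then the mean exit time from the middle state satisfies u((n+1)/2) ≥ (1/4)·e^{3(n−1)/(8π)}. -/

import Mathlib

open Finset Filter
open scoped Real

noncomputable section

namespace RareChain

/-- The potential `w(i) = ((n-1)/(4π)) cos(4π(i-1)/(n-1))`. -/
def w (n i : ℕ) : ℝ :=
  ((n : ℝ) - 1) / (4 * Real.pi) * Real.cos (4 * Real.pi * ((i : ℝ) - 1) / ((n : ℝ) - 1))

/-- The normalizing constant `Z = ∑_{j=1}^n e^{w(j)}`. -/
def Z (n : ℕ) : ℝ := ∑ j ∈ Finset.Icc 1 n, Real.exp (w n j)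

/-- The invariant probability vector `p(i) = e^{w(i)} / Z`. -/
def p (n i : ℕ) : ℝ := Real.exp (w n i) / Z n

/-- The nearest-neighbor transition matrix of Section 3 of the paper (indices in `{1,…,n}`,
entries outside read as `0`). -/
def Pmat (n : ℕ) (i j : ℕ) : ℝ :=
  if i < 1 ∨ n < i ∨ j < 1 ∨ n < j then 0
  else if j = i + 1 then p n (i + 1) / (2 * (p n i + p n (i + 1)))
  else if j + 1 = i then p n (i - 1) / (2 * (p n i + p n (i - 1)))
  else if j = i then
    1 - (if i + 1 ≤ n then p n (i + 1) / (2 * (p n i + p n (i + 1))) else 0)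
      - (if 2 ≤ i then p n (i - 1) / (2 * (p n i + p n (i - 1))) else 0)
  else 0

/-!
The chain is reversible with respect to `p`, with conductances `c(i) = p(i) P(i,i+1)`, so
`p(i) ((P - I) f)(i)` is the discrete divergence of the flux `c(i) (f(i+1) - f(i))`. The Green
function of the path `1, …, n` with a unit source at `m` is piecewise linear in the resistance
coordinate; multiplied by `p(m)` it is a subsolution of `u = 1 + P u`, so the maximum principle
gives `u(m) ≥ p(m) R(1,m) R(m,n) / R(1,n)`. At the middle state `w` attains its maximum
`(n-1)/(4π)`, while each half of the path contains a state where `w ≤ -(n-1)/(8π)`, which makes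
both resistances at least `2 Z e^{(n-1)/(8π)}`; hence `u(m) ≥ e^{3(n-1)/(8π)}`.
-/

open Real

/-- For `q = p n` this is `p(i) P(i,i+1) = p(i+1) P(i+1,i)`. -/
def conductance (q : ℕ → ℝ) (i : ℕ) : ℝ := q i * q (i + 1) / (2 * (q i + q (i + 1)))

def resistance (κ : ℕ → ℝ) (a b : ℕ) : ℝ := ∑ k ∈ Ico a b, (κ k)⁻¹

def flux (κ f : ℕ → ℝ) (i : ℕ) : ℝ := κ i * (f (i + 1) - f i)

/-- The Green function of the path `a, …, b` with conductances `κ` and a unit source at `m`. -/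
def green (κ : ℕ → ℝ) (a b m i : ℕ) : ℝ :=
  if i ≤ m then resistance κ a i * resistance κ m b / resistance κ a b
  else resistance κ a m * resistance κ i b / resistance κ a b

section Path

variable {κ : ℕ → ℝ} {a b m i : ℕ}

lemma resistance_of_le (κ : ℕ → ℝ) (h : b ≤ a) : resistance κ a b = 0 := by
  simp [resistance, Ico_eq_empty_of_le h]

lemma resistance_add (ham : a ≤ m) (hmb : m ≤ b) :
    resistance κ a m + resistance κ m b = resistance κ a b :=
  sum_Ico_consecutive _ ham hmb

lemma inv_le_resistance (hκ : ∀ k, 0 < κ k) {j : ℕ} (hj : j ∈ Ico a b) :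
    (κ j)⁻¹ ≤ resistance κ a b :=
  single_le_sum (fun k _ => (inv_pos.2 (hκ k)).le) hj

lemma resistance_pos (hκ : ∀ k, 0 < κ k) (hab : a < b) : 0 < resistance κ a b :=
  (inv_pos.2 (hκ a)).trans_le (inv_le_resistance hκ (left_mem_Ico.2 hab))

lemma green_of_le (h : i ≤ m) :
    green κ a b m i = resistance κ a i * resistance κ m b / resistance κ a b :=
  if_pos h

lemma green_of_ge (h : m ≤ i) :
    green κ a b m i = resistance κ a m * resistance κ i b / resistance κ a b := by
  rcases h.eq_or_lt with rfl | h
  · exact green_of_le le_rfl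
  · exact if_neg h.not_ge

lemma green_left : green κ a b m a = 0 := by
  unfold green
  split_ifs with h
  · rw [resistance_of_le κ le_rfl, zero_mul, zero_div]
  · rw [resistance_of_le κ (not_le.1 h).le, zero_mul, zero_div]

lemma green_right : green κ a b m b = 0 := by
  unfold green
  split_ifs with h
  · rw [resistance_of_le κ h, mul_zero, zero_div]
  · rw [resistance_of_le κ le_rfl, mul_zero, zero_div]

lemma flux_green (hκ : κ i ≠ 0) (hai : a ≤ i) (hib : i < b) :
    flux κ (green κ a b m) i =
      (if i < m then resistance κ m b else -resistance κ a m) / resistance κ a b := by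
  unfold flux
  split_ifs with him
  · rw [green_of_le him, green_of_le him.le]
    simp only [resistance]
    rw [sum_Ico_succ_top hai]
    field_simp
    ring
  · rw [green_of_ge (by omega), green_of_ge (not_lt.1 him)]
    simp only [resistance]
    rw [sum_eq_sum_Ico_succ_bot hib]
    field_simp
    ring

lemma flux_green_sub (hκ : ∀ k, 0 < κ k) (hai : a < i) (hib : i < b) :
    flux κ (green κ a b m) i - flux κ (green κ a b m) (i - 1) = if i = m then -1 else 0 := by
  rw [flux_green (hκ i).ne' hai.le hib, flux_green (hκ _).ne' (by omega) (by omega)]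
  have hR := (resistance_pos hκ (hai.trans hib)).ne'
  rcases lt_trichotomy i m with h | rfl | h
  · rw [if_pos h, if_pos (by omega), if_neg h.ne]
    ring
  · rw [if_neg (lt_irrefl i), if_pos (by omega), if_pos rfl]
    field_simp
    linarith [resistance_add (κ := κ) hai.le hib.le]
  · rw [if_neg (by omega), if_neg (by omega), if_neg h.ne']
    ring

lemma nonpos_of_flux_le {g : ℕ → ℝ} (hκ : ∀ k, 0 < κ k)
    (hsub : ∀ i, a < i → i < b → flux κ g (i - 1) ≤ flux κ g i)
    (ha : g a ≤ 0) (hb : g b ≤ 0) (hai : a ≤ i) (hib : i ≤ b) : g i ≤ 0 := by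
  by_contra! hpos
  have hmax : ∃ k, k ∈ Icc a b ∧ ∀ j ∈ Icc a b, g j ≤ g k := by
    obtain ⟨k, hk, hmax⟩ := (Icc a b).exists_max_image g ⟨i, mem_Icc.2 ⟨hai, hib⟩⟩
    exact ⟨k, hk, hmax⟩
  -- the leftmost maximiser `k` is interior, and `g` strictly increases into it
  set k := Nat.find hmax
  obtain ⟨hk, hkmax⟩ := Nat.find_spec hmax
  have hgk : 0 < g k := hpos.trans_le (hkmax i (mem_Icc.2 ⟨hai, hib⟩))
  rw [mem_Icc] at hk
  have hak : a < k := lt_of_le_of_ne hk.1 fun h => by rw [← h] at hgk; linarith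
  have hkb : k < b := lt_of_le_of_ne' hk.2 fun h => by rw [← h] at hgk; linarith
  have hleft : g (k - 1) < g k := by
    have := Nat.find_min hmax (show k - 1 < k by omega)
    push Not at this
    obtain ⟨j, hj, hgj⟩ := this (mem_Icc.2 ⟨by omega, by omega⟩)
    exact hgj.trans_le (hkmax j hj)
  have hright : g (k + 1) ≤ g k := hkmax _ (mem_Icc.2 ⟨by omega, by omega⟩)
  have := hsub k hak hkb
  unfold flux at this
  rw [Nat.sub_add_cancel (by omega : 1 ≤ k)] at this
  nlinarith [hκ k, hκ (k - 1)]

end Path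

lemma conductance_pos {q : ℕ → ℝ} (hq : ∀ i, 0 < q i) (i : ℕ) : 0 < conductance q i := by
  have := hq i; have := hq (i + 1)
  unfold conductance
  positivity

lemma two_mul_inv_le_resistance {q : ℕ → ℝ} (hq : ∀ i, 0 < q i) {a b j : ℕ}
    (hj : j ∈ Ico a b) : 2 * (q j)⁻¹ ≤ resistance (conductance q) a b := by
  refine le_trans ?_ (inv_le_resistance (conductance_pos hq) hj)
  have h₀ := hq j; have h₁ := hq (j + 1)
  rw [conductance, inv_div, le_div_iff₀ (by positivity)]
  field_simp
  linarith

lemma half_le_mul_div_add {x y L : ℝ} (hL : 0 < L) (hx : L ≤ x) (hy : L ≤ y) :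
    L / 2 ≤ x * y / (x + y) := by
  rw [le_div_iff₀ (by linarith)]
  nlinarith

lemma Z_pos {n : ℕ} (hn : 1 ≤ n) : 0 < Z n :=
  sum_pos (fun _ _ => exp_pos _) ⟨1, mem_Icc.2 ⟨le_rfl, hn⟩⟩

lemma p_pos {n : ℕ} (hn : 1 ≤ n) (i : ℕ) : 0 < p n i :=
  div_pos (exp_pos _) (Z_pos hn)

lemma sum_Pmat_mul {n i : ℕ} (hi : 2 ≤ i) (hin : i + 1 ≤ n) (f : ℕ → ℝ) :
    ∑ j ∈ Icc 1 n, Pmat n i j * f j =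
      Pmat n i (i - 1) * f (i - 1) + Pmat n i i * f i + Pmat n i (i + 1) * f (i + 1) := by
  have hsub : {i - 1, i, i + 1} ⊆ Icc 1 n := by
    intro j hj
    simp only [mem_insert, mem_singleton] at hj
    rw [mem_Icc]
    omega
  rw [← sum_subset hsub, sum_insert (by simp; omega), sum_insert (by simp), sum_singleton,
    add_assoc]
  intro j hj hji
  simp only [mem_Icc] at hj
  simp only [mem_insert, mem_singleton, not_or] at hji
  rw [Pmat, if_neg (by omega), if_neg (by omega), if_neg (by omega), if_neg (by omega), zero_mul]

lemma p_mul_sum_Pmat_mul_sub {n i : ℕ} (hi : 2 ≤ i) (hin : i + 1 ≤ n) (f : ℕ → ℝ) :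
    p n i * (∑ j ∈ Icc 1 n, Pmat n i j * f j - f i) =
      flux (conductance (p n)) f i - flux (conductance (p n)) f (i - 1) := by
  rw [sum_Pmat_mul hi hin]
  obtain ⟨k, rfl⟩ : ∃ k, i = k + 1 := ⟨i - 1, by omega⟩
  have := p_pos (n := n) (by omega) k
  have := p_pos (n := n) (by omega) (k + 1)
  have := p_pos (n := n) (by omega) (k + 1 + 1)
  simp (disch := omega) only [Pmat, flux, conductance, Nat.add_sub_cancel, if_pos, if_neg, if_true]
  field_simp
  ring

theorem p_mul_green_le_exitTime {n m : ℕ} (hm1 : 1 ≤ m) (hmn : m ≤ n) {u : ℕ → ℝ}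
    (hu1 : u 1 = 0) (hun : u n = 0)
    (hharm : ∀ i, 2 ≤ i → i ≤ n - 1 → u i = 1 + ∑ j ∈ Icc 1 n, Pmat n i j * u j) :
    p n m * green (conductance (p n)) 1 n m m ≤ u m := by
  set κ := conductance (p n)
  have hp := p_pos (n := n) (by omega)
  have hflux (g : ℕ → ℝ) (i : ℕ) :
      flux κ (fun j => p n m * green κ 1 n m j - g j) i =
        p n m * flux κ (green κ 1 n m) i - flux κ g i := by
    simp only [flux]
    ring
  suffices h : p n m * green κ 1 n m m - u m ≤ 0 by linarith
  refine nonpos_of_flux_le (g := fun j => p n m * green κ 1 n m j - u j)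
    (conductance_pos hp) (fun i h1i hin => ?_) ?_ ?_ hm1 hmn
  · have hu : flux κ u i - flux κ u (i - 1) = -p n i := by
      rw [← p_mul_sum_Pmat_mul_sub h1i hin, hharm i h1i (by omega)]
      ring
    have hv := flux_green_sub (κ := κ) (m := m) (conductance_pos hp) h1i hin
    rw [hflux, hflux]
    split_ifs at hv with him
    · subst him
      linear_combination hu - p n i * hv
    · linear_combination hu - p n m * hv + (hp i).le
  · simp [green_left, hu1]
  · simp [green_right, hun]

def amplitude (n : ℕ) : ℝ := ((n : ℝ) - 1) / (4 * π)

lemma cos_le_neg_half {θ : ℝ} (h₁ : 2 * π / 3 ≤ θ) (h₂ : θ ≤ 4 * π / 3) :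
    cos θ ≤ -(1 / 2) := by
  have h : cos (π / 3) ≤ cos |θ - π| :=
    cos_le_cos_of_nonneg_of_le_pi (abs_nonneg _) (by linarith [pi_pos])
      (abs_le.2 ⟨by linarith, by linarith⟩)
  rw [cos_abs, cos_sub_pi, cos_pi_div_three] at h
  linarith

lemma w_le_of_cos_le {n i : ℕ} (hn : 1 ≤ n)
    (h : cos (4 * π * ((i : ℝ) - 1) / ((n : ℝ) - 1)) ≤ -(1 / 2)) :
    w n i ≤ -(amplitude n / 2) := by
  have hh : 0 ≤ amplitude n := div_nonneg (sub_nonneg.2 (Nat.one_le_cast.2 hn)) (by positivity)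
  change amplitude n * _ ≤ _
  nlinarith

lemma w_middle {n : ℕ} (hn : Odd n) : w n ((n + 1) / 2) = amplitude n := by
  obtain ⟨k, rfl⟩ := hn
  rw [show (2 * k + 1 + 1) / 2 = k + 1 by omega]
  rcases k.eq_zero_or_pos with rfl | hk
  · simp [w, amplitude]
  · have hk' : (k : ℝ) ≠ 0 := Nat.cast_ne_zero.2 hk.ne'
    have : 4 * π * (((k + 1 : ℕ) : ℝ) - 1) / (((2 * k + 1 : ℕ) : ℝ) - 1) = 2 * π := by
      push_cast
      field_simp
      ring
    rw [w, this, cos_two_pi, mul_one, amplitude]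

lemma exists_w_le_left_half {n : ℕ} (hn : 7 ≤ n) :
    ∃ j ∈ Ico 1 ((n + 1) / 2), w n j ≤ -(amplitude n / 2) := by
  -- `j - 1 = ⌈(n-1)/6⌉` puts the angle of `w` in `[2π/3, 4π/3]`; this needs `n ≥ 7`
  have h₁ : (n : ℝ) ≤ 6 * ((n + 4) / 6 : ℕ) + 1 := by
    exact_mod_cast (by omega : n ≤ 6 * ((n + 4) / 6) + 1)
  have h₂ : 3 * (((n + 4) / 6 : ℕ) : ℝ) + 1 ≤ n := by
    exact_mod_cast (by omega : 3 * ((n + 4) / 6) + 1 ≤ n)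
  have h₀ : (7 : ℝ) ≤ n := by exact_mod_cast hn
  have hs : (0 : ℝ) < n - 1 := by linarith
  refine ⟨(n + 4) / 6 + 1, mem_Ico.2 ⟨by omega, by omega⟩, w_le_of_cos_le (by omega)
    (cos_le_neg_half ?_ ?_)⟩ <;> push_cast
  · rw [le_div_iff₀ hs]; nlinarith [pi_pos]
  · rw [div_le_iff₀ hs]; nlinarith [pi_pos]

lemma exists_w_le_right_half {n : ℕ} (hn : 7 ≤ n) :
    ∃ j ∈ Ico ((n + 1) / 2) n, w n j ≤ -(amplitude n / 2) := by
  -- `j - 1 = ⌈2(n-1)/3⌉` puts the angle of `w` in `[2π/3, 4π/3] + 2π`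
  have h₁ : 2 * (n : ℝ) ≤ 3 * (2 * n / 3 : ℕ) + 2 := by
    exact_mod_cast (by omega : 2 * n ≤ 3 * (2 * n / 3) + 2)
  have h₂ : 6 * ((2 * n / 3 : ℕ) : ℝ) + 5 ≤ 5 * n := by
    exact_mod_cast (by omega : 6 * (2 * n / 3) + 5 ≤ 5 * n)
  have h₀ : (7 : ℝ) ≤ n := by exact_mod_cast hn
  have hs : (0 : ℝ) < n - 1 := by linarith
  refine ⟨2 * n / 3 + 1, mem_Ico.2 ⟨by omega, by omega⟩, w_le_of_cos_le (by omega) ?_⟩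
  rw [← cos_sub_two_pi]
  apply cos_le_neg_half <;> push_cast
  · rw [le_sub_iff_add_le, le_div_iff₀ hs]; nlinarith [pi_pos]
  · rw [sub_le_iff_le_add, div_le_iff₀ hs]; nlinarith [pi_pos]

lemma resistance_ge_of_w_le {n a b j : ℕ} (hn : 1 ≤ n) (hj : j ∈ Ico a b)
    (hw : w n j ≤ -(amplitude n / 2)) :
    2 * (Z n * exp (amplitude n / 2)) ≤ resistance (conductance (p n)) a b := by
  refine le_trans ?_ (two_mul_inv_le_resistance (p_pos hn) hj)
  rw [p, inv_div, div_eq_mul_inv (Z n), ← exp_neg]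
  gcongr
  · exact (Z_pos hn).le
  · linarith

/-- Eq. (7) of the paper: for odd `n ≥ 7`, the mean exit time from the middle
state satisfies `u((n+1)/2) ≥ (1/4) e^{3(n-1)/(8π)}`. -/
theorem stmt18 (n : ℕ) (hodd : Odd n) (hn : 7 ≤ n) (u : ℕ → ℝ)
    (hu1 : u 1 = 0) (hun : u n = 0)
    (hharm : ∀ i, 2 ≤ i → i ≤ n - 1 →
      u i = 1 + ∑ j ∈ Finset.Icc 1 n, Pmat n i j * u j) :
    (1 / 4 : ℝ) * Real.exp (3 * ((n : ℝ) - 1) / (8 * Real.pi)) ≤ u ((n + 1) / 2) := by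
  have hn1 : 1 ≤ n := by omega
  set m := (n + 1) / 2
  set κ := conductance (p n)
  set L := 2 * (Z n * exp (amplitude n / 2)) with hLdef
  obtain ⟨j₁, hj₁, hw₁⟩ := exists_w_le_left_half hn
  obtain ⟨j₂, hj₂, hw₂⟩ := exists_w_le_right_half hn
  have hL : 0 < L := by have := Z_pos hn1; positivity
  calc (1 / 4 : ℝ) * exp (3 * ((n : ℝ) - 1) / (8 * π))
      ≤ exp (amplitude n + amplitude n / 2) := by
        rw [show amplitude n + amplitude n / 2 = 3 * ((n : ℝ) - 1) / (8 * π) by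
          unfold amplitude; ring]
        nlinarith [exp_pos (3 * ((n : ℝ) - 1) / (8 * π))]
    _ = p n m * (L / 2) := by
        rw [p, w_middle hodd, exp_add, hLdef]
        field_simp [(Z_pos hn1).ne']
    _ ≤ p n m * (resistance κ 1 m * resistance κ m n / resistance κ 1 n) := by
        rw [← resistance_add (κ := κ) (a := 1) (m := m) (b := n) (by omega) (by omega)]
        exact mul_le_mul_of_nonneg_left (half_le_mul_div_add hL
          (resistance_ge_of_w_le hn1 hj₁ hw₁) (resistance_ge_of_w_le hn1 hj₂ hw₂))
          (p_pos hn1 m).le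
    _ = p n m * green κ 1 n m m := by rw [green_of_le le_rfl]
    _ ≤ u m := p_mul_green_le_exitTime (by omega) (by omega) hu1 hun hharm

end RareChain
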